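/- A classical propositional formula A (containing no modal operators) is contingent if and only if A is nontrifling, i.e., GL_ω does not prove □□A → □A. -/

import Mathlib

/-- Modal propositional formulas (variables are indexed by `ℕ`). -/
inductive MF : Type
  | var : ℕ → MF
  | fal : MF
  | imp : MF → MF → MF
  | box : MF → MF
deriving DecidableEq

namespace MF

def neg (A : MF) : MF := imp A fal
def top : MF := neg fal
def conj (A B : MF) : MF := neg (imp A (neg B))
def disj (A B : MF) : MF := imp (neg A) B
def biimp (A B : MF) : MF := conj (imp A B) (imp B A)
def dia (A : MF) : MF := neg (box (neg A))
def boxn : ℕ → MF → MF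
  | 0, A => A
  | n+1, A => box (boxn n A)
def dian (n : ℕ) (A : MF) : MF := neg (boxn n (neg A))

/-- Uniform substitution. -/
def subst (s : ℕ → MF) : MF → MF
  | var n => s n
  | fal => fal
  | imp A B => imp (subst s A) (subst s B)
  | box A => box (subst s A)

/-- The set of subformulas. -/
def subF : MF → Finset MF
  | var n => {var n}
  | fal => {fal}
  | imp A B => insert (imp A B) (subF A ∪ subF B)
  | box A => insert (box A) (subF A)

def isBox : MF → Bool
  | box _ => true
  | _ => false

def unbox : MF → MF
  | box A => A
  | A => A

/-- `cx A` is the number of subformulas of `A` of the form `□C`. -/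
def cx (A : MF) : ℕ := ((subF A).filter (fun B => isBox B = true)).card

/-- `Rf(A) = {□B → B : □B ∈ Sub(A)}`. -/
def RfSet (A : MF) : Finset MF :=
  ((subF A).filter (fun B => isBox B = true)).image (fun B => imp B (unbox B))

/-- Conjunction of a finite set of formulas. -/
noncomputable def conjFin (s : Finset MF) : MF := s.toList.foldr conj top

/-- `A` is an instance of a propositional tautology. -/
def TautInst (A : MF) : Prop :=
  ∀ v : MF → Bool, (∀ B C, v (imp B C) = (!(v B) || v C)) → v fal = false → v A = true

end MF

/-- Provability in the Gödel–Löb logic GL. -/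
inductive GLPrv : MF → Prop
  | taut {A} : MF.TautInst A → GLPrv A
  | k (A B : MF) : GLPrv (MF.imp (MF.box (MF.imp A B)) (MF.imp (MF.box A) (MF.box B)))
  | lob (A : MF) : GLPrv (MF.imp (MF.box (MF.imp (MF.box A) A)) (MF.box A))
  | mp {A B} : GLPrv (MF.imp A B) → GLPrv A → GLPrv B
  | nec {A} : GLPrv A → GLPrv (MF.box A)

/-- Provability in GL + Γ: axioms are GL-theorems and substitution instances of
formulas in Γ; rules are modus ponens (and substitution, built into the axiom rule). -/
inductive ExtPrv (Ax : Set MF) : MF → Prop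
  | gl {A} : GLPrv A → ExtPrv Ax A
  | ax {A} (s : ℕ → MF) : A ∈ Ax → ExtPrv Ax (A.subst s)
  | mp {A B} : ExtPrv Ax (MF.imp A B) → ExtPrv Ax A → ExtPrv Ax B

/-- GL_ω = GL + {◇ⁿ⊤ : n ∈ ω}. -/
def GLomegaPrv : MF → Prop := ExtPrv (Set.range fun n => MF.dian n MF.top)

/-- GLS = GL + {□p → p}. -/
def GLSPrv : MF → Prop := ExtPrv {MF.imp (MF.box (MF.var 0)) (MF.var 0)}

/-- F_s = □^{s+1}⊥ → □^s⊥. -/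
def Fmla (s : ℕ) : MF := MF.imp (MF.boxn (s+1) MF.fal) (MF.boxn s MF.fal)

/-- GL + {¬F_s}. -/
def GLFPrv (s : ℕ) : MF → Prop := ExtPrv {MF.neg (Fmla s)}

/-- A formula without modal operators. -/
def MF.BoxFree : MF → Prop
  | MF.var _ => True
  | MF.fal => True
  | MF.imp A B => MF.BoxFree A ∧ MF.BoxFree B
  | MF.box _ => False

/-- `A` is nontrifling iff GL_ω does not prove □□A → □A. -/
def Nontrifling (A : MF) : Prop :=
  ¬ GLomegaPrv (MF.imp (MF.box (MF.box A)) (MF.box A))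

/-!
If `A` is a tautology, GL proves `□A` and hence `□□A → □A`; if `¬A` is, GL proves
`□□A → □□⊥`, which GL_ω refutes with `◇²⊤`. If `A` is contingent, take the frame `(ℕ∞, >)` in
which `0` is visible only from `⊤`. It is transitive and conversely well-founded, so it validates
GL, and its root `⊤` has every finite depth, so `⊤` forces each `◇ⁿ⊤` and hence every theorem of
GL_ω. Make `A` false at `0` and true everywhere else: since `0` is reachable from `⊤` in one
step but not in two, the root forces `□□A` but not `□A`.
-/

namespace MF

def IsValuation (v : MF → Bool) : Prop :=
  (∀ B C, v (imp B C) = (!(v B) || v C)) ∧ v fal = false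

theorem IsValuation.neg {v : MF → Bool} (hv : IsValuation v) (A : MF) :
    v (neg A) = !(v A) := by
  simp [MF.neg, hv.1, hv.2]

theorem exists_isValuation_eq_false {A : MF} (h : ¬ TautInst A) :
    ∃ v, IsValuation v ∧ v A = false := by
  simp only [TautInst, not_forall, Bool.not_eq_true] at h
  obtain ⟨v, himp, hfal, hA⟩ := h
  exact ⟨v, ⟨himp, hfal⟩, hA⟩

theorem BoxFree.valuation_eq {v v' : MF → Bool} (hv : IsValuation v) (hv' : IsValuation v')
    (hvar : ∀ k, v (var k) = v' (var k)) : ∀ {B : MF}, B.BoxFree → v B = v' B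
  | var k, _ => hvar k
  | fal, _ => hv.2.trans hv'.2.symm
  | imp B C, ⟨hB, hC⟩ => by
    rw [hv.1, hv'.1, valuation_eq hv hv' hvar hB, valuation_eq hv hv' hvar hC]

theorem subst_boxn (s : ℕ → MF) (n : ℕ) (B : MF) :
    subst s (boxn n B) = boxn n (subst s B) := by
  induction n with
  | zero => rfl
  | succ n ih => simp only [boxn, subst, ih]

theorem subst_dian_top (s : ℕ → MF) (n : ℕ) : subst s (dian n top) = dian n top := by
  simp only [dian, MF.neg, top, subst, subst_boxn]

section Kripke

variable {W : Type*} (R : W → W → Prop) (V : W → ℕ → Bool)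

def Forces : W → MF → Prop
  | w, var k => V w k = true
  | _, fal => False
  | w, imp B C => Forces w B → Forces w C
  | w, box B => ∀ u, R w u → Forces u B

open Classical in
theorem isValuation_forces (w : W) : IsValuation (fun B => decide (Forces R V w B)) :=
  ⟨fun B C => by by_cases hB : Forces R V w B <;> simp [Forces, hB], decide_eq_false id⟩

variable {R V}

theorem forces_iff_of_boxFree {w : W} {v : MF → Bool} (hv : IsValuation v)
    (hvar : ∀ k, V w k = v (var k)) {B : MF} (hB : B.BoxFree) : Forces R V w B ↔ v B = true := by
  classical
  rw [← hB.valuation_eq (isValuation_forces R V w) hv (fun k => by simp [Forces, hvar])]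
  simp

theorem GLPrv.forces [IsTrans W R] (hWf : WellFounded (flip R)) {B : MF}
    (h : GLPrv B) (w : W) : Forces R V w B := by
  induction h generalizing w with
  | taut ht =>
    classical
    have hv := isValuation_forces R V w
    simpa using ht (fun B => decide (Forces R V w B)) hv.1 hv.2
  | k => exact fun hBC hB u hwu => hBC u hwu (hB u hwu)
  | lob B =>
    intro hLob u
    induction u using hWf.induction with
    | _ u ih => exact fun hwu => hLob u hwu fun z huz => ih z huz (_root_.trans hwu huz)
  | mp _ _ ihBC ihB => exact ihBC w (ihB w)
  | nec _ ih => exact fun u _ => ih u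

theorem ExtPrv.forces {Ax : Set MF} [IsTrans W R] (hWf : WellFounded (flip R))
    {w : W} (hAx : ∀ s, ∀ B ∈ Ax, Forces R V w (subst s B)) {B : MF} (h : ExtPrv Ax B) :
    Forces R V w B := by
  induction h with
  | gl h => exact GLPrv.forces hWf h w
  | ax s hB => exact hAx s _ hB
  | mp _ _ ihBC ihB => exact ihBC ihB

end Kripke

def RootedFrame (x y : ℕ∞) : Prop := y < x ∧ (y = 0 → x = ⊤)

instance : IsTrans ℕ∞ RootedFrame :=
  ⟨fun _ _ _ ⟨hyx, _⟩ ⟨hzy, hz⟩ => ⟨hzy.trans hyx, fun h0 => absurd (hz h0) hyx.ne_top⟩⟩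

theorem rootedFrame_wellFounded_flip : WellFounded (flip RootedFrame) :=
  wellFounded_lt.mono fun _ _ h => h.1

theorem not_forces_boxn_neg_top_of_lt {V : ℕ∞ → ℕ → Bool} (n : ℕ) {w : ℕ∞}
    (hw : (n : ℕ∞) < w) : ¬ Forces RootedFrame V w (boxn n (neg top)) := by
  induction n generalizing w with
  | zero => exact fun h => h id
  | succ n ih =>
    intro h
    have hstep : RootedFrame w (n + 1 : ℕ) := ⟨by exact_mod_cast hw, fun h0 => by simp at h0⟩
    exact ih (by exact_mod_cast n.lt_succ_self) (h _ hstep)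

theorem glOmegaPrv_forces_top {V : ℕ∞ → ℕ → Bool} {B : MF} (h : GLomegaPrv B) :
    Forces RootedFrame V ⊤ B := by
  refine ExtPrv.forces rootedFrame_wellFounded_flip ?_ h
  rintro s _ ⟨n, rfl⟩
  rw [subst_dian_top]
  exact not_forces_boxn_neg_top_of_lt n (WithTop.coe_lt_top n)

end MF

open MF

theorem nontrifling_of_isValuation {A : MF} (hA : A.BoxFree) {v₀ v₁ : MF → Bool}
    (hv₀ : IsValuation v₀) (hv₁ : IsValuation v₁) (hA₀ : v₀ A = false) (hA₁ : v₁ A = true) :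
    Nontrifling A := by
  intro h
  let V : ℕ∞ → ℕ → Bool := fun w k => if w = 0 then v₀ (var k) else v₁ (var k)
  have hboxbox : Forces RootedFrame V ⊤ (box (box A)) := by
    intro y ⟨hy, _⟩ z ⟨_, hz⟩
    have hz0 : z ≠ 0 := fun h0 => hy.ne (hz h0)
    exact (forces_iff_of_boxFree hv₁ (fun k => by simp [V, hz0]) hA).2 hA₁
  have hA0 := glOmegaPrv_forces_top h hboxbox 0 ⟨WithTop.coe_lt_top 0, fun _ => rfl⟩
  simpa [hA₀] using (forces_iff_of_boxFree hv₀ (fun k => by simp [V]) hA).1 hA0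

theorem GLPrv.box_mono {X Y : MF} (h : GLPrv (imp X Y)) : GLPrv (imp (box X) (box Y)) :=
  GLPrv.mp (GLPrv.k X Y) (GLPrv.nec h)

theorem not_nontrifling_of_tautInst {A : MF} (h : TautInst A) : ¬ Nontrifling A := by
  have hK : TautInst (imp (box A) (imp (box (box A)) (box A))) := by
    intro v himp _
    simp only [himp]
    cases v (box A) <;> simp
  exact not_not.2 (ExtPrv.gl (GLPrv.mp (GLPrv.taut hK) (GLPrv.nec (GLPrv.taut h))))

theorem not_nontrifling_of_tautInst_neg {A : MF} (h : TautInst (neg A)) : ¬ Nontrifling A := by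
  have hA : TautInst (imp A (neg top)) := fun v himp hfal => by
    have hv : IsValuation v := ⟨himp, hfal⟩
    simpa [himp, hv.neg, top, hfal] using h v himp hfal
  have hSyl : TautInst (imp (imp (box (box A)) (box (box (neg top))))
      (imp (neg (box (box (neg top)))) (imp (box (box A)) (box A)))) := by
    intro v himp hfal
    simp only [himp, IsValuation.neg ⟨himp, hfal⟩]
    cases v (box (box A)) <;> cases v (box (box (neg top))) <;> simp
  have hMono : GLPrv (imp (box (box A)) (box (box (neg top)))) :=
    (GLPrv.taut hA).box_mono.box_mono
  have hDia : GLomegaPrv (dian 2 top) := by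
    unfold GLomegaPrv
    simpa only [subst_dian_top] using
      ExtPrv.ax (Ax := Set.range fun n => dian n top) (fun _ => fal) ⟨2, rfl⟩
  exact not_not.2 <| ExtPrv.mp (ExtPrv.mp (ExtPrv.gl (GLPrv.taut hSyl)) (ExtPrv.gl hMono)) hDia

/-- a box-free (classical propositional) formula is contingent
(neither a tautology nor unsatisfiable) iff it is nontrifling. -/
theorem contingent_iff_nontrifling (A : MF) (hA : MF.BoxFree A) :
    (¬ MF.TautInst A ∧ ¬ MF.TautInst (MF.neg A)) ↔ Nontrifling A := by
  refine ⟨fun ⟨hA₀, hA₁⟩ => ?_, fun h =>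
    ⟨fun ht => not_nontrifling_of_tautInst ht h, fun ht => not_nontrifling_of_tautInst_neg ht h⟩⟩
  obtain ⟨v₀, hv₀, hA₀⟩ := exists_isValuation_eq_false hA₀
  obtain ⟨v₁, hv₁, hA₁⟩ := exists_isValuation_eq_false hA₁
  exact nontrifling_of_isValuation hA hv₀ hv₁ hA₀ (by simpa [hv₁.neg] using hA₁)
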